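/- arXiv:2409.13074 — 4 statements merged into one kernel-verified Lean document; each statement's English description precedes it below -/
import Mathlib

section
/- For the ODE x'(s) = (w+1) - w·tanh(s·x(s)) on [0,1] with w ≥ 0 and initial condition x(0) ≥ -√(w+1)/2, the solution satisfies x(1) ≥ √(w+1)/4. -/
/-!
Write `a = √(w+1)`. Since `tanh < 1`, the solution has slope at least `1`, so it is increasing.
If `x 1 < a/4`, then `x < a/4` on all of `[0,1]`, hence `s x(s) ≤ 1/4` for `s ≤ 1/a`, and there
`tanh (s x(s)) ≤ 1/4` makes the slope at least `3a²/4`. Over `[0, 1/a]` this lifts `x` by `3a/4`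
from `x 0 ≥ -a/2`, so `x 1 ≥ x (1/a) ≥ a/4`, a contradiction.
-/

open Real Set

theorem mul_sub_le_sub_of_hasDerivAt_of_le {f f' : ℝ → ℝ} {C u v : ℝ} (huv : u ≤ v)
    (hf : ∀ s ∈ Icc u v, HasDerivAt f (f' s) s) (hC : ∀ s ∈ Icc u v, C ≤ f' s) :
    C * (v - u) ≤ f v - f u := by
  have hint : ∀ s ∈ interior (Icc u v), s ∈ Icc u v := fun s hs =>
    Ioo_subset_Icc_self (by rwa [interior_Icc] at hs)
  refine (convex_Icc u v).mul_sub_le_image_sub_of_le_deriv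
    (fun s hs => (hf s hs).continuousAt.continuousWithinAt)
    (fun s hs => (hf s (hint s hs)).differentiableAt.differentiableWithinAt)
    (fun s hs => ?_) u (left_mem_Icc.2 huv) v (right_mem_Icc.2 huv) huv
  rw [(hf s (hint s hs)).deriv]
  exact hC s (hint s hs)

theorem Real.tanh_le_self {u : ℝ} (hu : 0 ≤ u) : tanh u ≤ u := by
  have hsinh : sinh u - sinh 0 ≤ u * cosh u - 0 * cosh 0 := by
    have := mul_sub_le_sub_of_hasDerivAt_of_le (C := 0) hu
      (f := fun t => t * cosh t - sinh t) (f' := fun t => t * sinh t)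
      (fun s _ => (((hasDerivAt_id' s).mul (hasDerivAt_cosh s)).sub
        (hasDerivAt_sinh s)).congr_deriv (by ring))
      (fun s hs => mul_nonneg hs.1 (sinh_nonneg_iff.2 hs.1))
    simp only [zero_mul] at this
    linarith
  rw [tanh_eq_sinh_div_cosh, div_le_iff₀ (cosh_pos u)]
  simpa using hsinh

theorem Real.tanh_le_of_le {u c : ℝ} (hc : 0 ≤ c) (hu : u ≤ c) : tanh u ≤ c := by
  rcases le_total 0 u with h | h
  · exact (tanh_le_self h).trans hu
  · rw [tanh_eq_sinh_div_cosh]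
    exact (div_nonpos_of_nonpos_of_nonneg (sinh_nonpos_iff.2 h) (cosh_pos u).le).trans hc

/-- For the guided probability flow ODE `x'(s) = (w+1) - w·tanh(s·x(s))` on `[0,1]`
with `w ≥ 0` and initial condition `x(0) ≥ -√(w+1)/2`, one has `x(1) ≥ √(w+1)/4`. -/
theorem stmt_0 (w : ℝ) (hw : 0 ≤ w) (x : ℝ → ℝ)
    (hode : ∀ s ∈ Set.Icc (0 : ℝ) 1,
      HasDerivAt x ((w + 1) - w * Real.tanh (s * x s)) s)
    (hinit : x 0 ≥ -Real.sqrt (w + 1) / 2) :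
    x 1 ≥ Real.sqrt (w + 1) / 4 := by
  set a := √(w + 1)
  have ha2 : a ^ 2 = w + 1 := sq_sqrt (by linarith)
  have ha1 : 1 ≤ a := one_le_sqrt.2 (by linarith)
  have hT : 1 / a ∈ Icc (0 : ℝ) 1 := ⟨by positivity, (div_le_one (by positivity)).2 ha1⟩
  have hincr : ∀ s ∈ Icc (0 : ℝ) 1, x s ≤ x 1 := fun s hs => by
    have := mul_sub_le_sub_of_hasDerivAt_of_le (C := 0) hs.2
      (fun r hr => hode r ⟨hs.1.trans hr.1, hr.2⟩) (fun r _ => by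
        nlinarith [tanh_lt_one (r * x r)])
    linarith
  by_contra! hlt
  have hfast : ∀ s ∈ Icc 0 (1 / a), 3 * (w + 1) / 4 ≤ (w + 1) - w * tanh (s * x s) := by
    intro s hs
    have hs1 : s ∈ Icc (0 : ℝ) 1 := ⟨hs.1, hs.2.trans hT.2⟩
    have hsx : s * x s ≤ 1 / 4 := calc
      s * x s ≤ s * (a / 4) := mul_le_mul_of_nonneg_left ((hincr s hs1).trans hlt.le) hs.1
      _ ≤ 1 / a * (a / 4) := by gcongr; exact hs.2
      _ = 1 / 4 := by field_simp
    nlinarith [tanh_le_of_le (by norm_num) hsx]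
  have hlift := mul_sub_le_sub_of_hasDerivAt_of_le hT.1
    (fun s hs => hode s ⟨hs.1, hs.2.trans hT.2⟩) hfast
  have hrate : 3 * (w + 1) / 4 * (1 / a - 0) = 3 * a / 4 := by
    rw [sub_zero, ← ha2]; field_simp
  linarith [hincr _ hT]
end

section
/- For the ODE x'(s) = (w+1) - w·tanh(s·x(s)) on [0,1] with w ≥ 100 and initial condition x(0) > -2w + 26·ln(w), the solution satisfies x(1) ≥ 0. -/
/-!
Suppose `x 1 < 0`. Since `x' ≥ 1`, `x` is increasing, so `x < 0` on `[0,1]`; then `tanh (s x) ≤ 0`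
gives `x' ≥ w + 1` and hence `x s ≤ -(w + 1)(1 - s)`. Feeding this back through
`tanh t ≤ -1 + 2 e^{2t}` gives `x' ≥ 2w + 1 - 2w e^{-2(w+1)s(1-s)}`, and splitting
`e^{-2ks(1-s)} ≤ e^{-ks} + e^{-k(1-s)}` with `k = w + 1` shows that the exponential part
integrates to at most `4`.
Hence `x 1 ≥ x 0 + 2w - 3 > 26 log w - 3 > 0`, a contradiction.
-/

open Real Set

lemma Real.tanh_nonpos {t : ℝ} (ht : t ≤ 0) : tanh t ≤ 0 := by
  rw [tanh_eq]
  refine div_nonpos_of_nonpos_of_nonneg ?_ (by positivity)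
  linarith [exp_le_exp.2 (by linarith : t ≤ -t)]

lemma Real.tanh_le_neg_one_add_two_mul_exp (t : ℝ) : tanh t ≤ -1 + 2 * exp (2 * t) := by
  rw [tanh_eq, div_le_iff₀ (by positivity)]
  have h₁ : exp (2 * t) * exp t = exp (3 * t) := by rw [← exp_add]; ring_nf
  have h₂ : exp (2 * t) * exp (-t) = exp t := by rw [← exp_add]; ring_nf
  nlinarith [exp_pos (3 * t)]

lemma Real.exp_neg_two_mul_mul_one_sub_le {k s : ℝ} (hk : 0 ≤ k) (hs : s ∈ Icc (0 : ℝ) 1) :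
    exp (-2 * k * s * (1 - s)) ≤ exp (-k * s) + exp (-k * (1 - s)) := by
  obtain ⟨hs₀, hs₁⟩ := hs
  rcases le_total s (1 / 2) with h | h
  · have hks : 0 ≤ k * s * (1 - 2 * s) := by
      have := mul_nonneg hk hs₀; nlinarith
    linarith [exp_le_exp.2 (by nlinarith : -2 * k * s * (1 - s) ≤ -k * s),
      exp_pos (-k * (1 - s))]
  · have hks : 0 ≤ k * (1 - s) * (2 * s - 1) := by
      have := mul_nonneg hk (sub_nonneg.2 hs₁); nlinarith
    linarith [exp_le_exp.2 (by nlinarith : -2 * k * s * (1 - s) ≤ -k * (1 - s)),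
      exp_pos (-k * s)]

lemma hasDerivAt_exp_neg_mul_sub_exp_neg_mul_one_sub (k s : ℝ) :
    HasDerivAt (fun s => exp (-k * s) - exp (-k * (1 - s)))
      (-k * (exp (-k * s) + exp (-k * (1 - s)))) s := by
  have h₁ : HasDerivAt (fun s => -k * s) (-k) s := by
    simpa using (hasDerivAt_id s).const_mul (-k)
  have h₂ : HasDerivAt (fun s => -k * (1 - s)) k s := by
    simpa using ((hasDerivAt_id s).const_sub 1).const_mul (-k)
  exact (h₁.exp.sub h₂.exp).congr_deriv (by ring)

lemma sub_le_sub_of_hasDerivAt_le {f g f' g' : ℝ → ℝ} {a b : ℝ} (hab : a ≤ b)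
    (hf : ∀ s ∈ Icc a b, HasDerivAt f (f' s) s) (hg : ∀ s ∈ Icc a b, HasDerivAt g (g' s) s)
    (hle : ∀ s ∈ Icc a b, g' s ≤ f' s) : g b - g a ≤ f b - f a := by
  have hfg : ∀ s ∈ Icc a b, HasDerivAt (fun s => f s - g s) (f' s - g' s) s :=
    fun s hs => (hf s hs).sub (hg s hs)
  have hmono : MonotoneOn (fun s => f s - g s) (Icc a b) :=
    monotoneOn_of_hasDerivWithinAt_nonneg (convex_Icc a b)
      (fun s hs => (hfg s hs).continuousAt.continuousWithinAt)
      (fun s hs => (hfg s (interior_subset hs)).hasDerivWithinAt)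
      (fun s hs => sub_nonneg.2 (hle s (interior_subset hs)))
  have := hmono (left_mem_Icc.2 hab) (right_mem_Icc.2 hab) hab
  linarith

def IsGuidedFlow (w : ℝ) (x : ℝ → ℝ) : Prop :=
  ∀ s ∈ Icc (0 : ℝ) 1, HasDerivAt x ((w + 1) - w * tanh (s * x s)) s

namespace IsGuidedFlow

variable {w : ℝ} {x : ℝ → ℝ} {s : ℝ}

lemma restrict (hx : IsGuidedFlow w x) (hs : s ∈ Icc (0 : ℝ) 1) :
    ∀ t ∈ Icc s 1, HasDerivAt x ((w + 1) - w * tanh (t * x t)) t :=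
  fun t ht => hx t ⟨hs.1.trans ht.1, ht.2⟩

lemma le_right (hx : IsGuidedFlow w x) (hw : 0 ≤ w) (hs : s ∈ Icc (0 : ℝ) 1) : x s ≤ x 1 := by
  have := sub_le_sub_of_hasDerivAt_le hs.2 (hx.restrict hs) (fun t _ => hasDerivAt_const t 0)
    fun t _ => by nlinarith [(tanh_lt_one (t * x t)).le]
  linarith

lemma le_of_neg (hx : IsGuidedFlow w x) (hw : 0 ≤ w) (hx₁ : x 1 < 0)
    (hs : s ∈ Icc (0 : ℝ) 1) : x s ≤ -(w + 1) * (1 - s) := by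
  have hlin (t : ℝ) : HasDerivAt (fun t => (w + 1) * t) (w + 1) t := by
    simpa using (hasDerivAt_id t).const_mul (w + 1)
  have := sub_le_sub_of_hasDerivAt_le hs.2 (hx.restrict hs) (fun t _ => hlin t) fun t ht => by
    have hxt : x t < 0 := (hx.le_right hw ⟨hs.1.trans ht.1, ht.2⟩).trans_lt hx₁
    nlinarith [tanh_nonpos (mul_nonpos_of_nonneg_of_nonpos (hs.1.trans ht.1) hxt.le)]
  linarith

lemma lowerBound_le_deriv (hx : IsGuidedFlow w x) (hw : 0 ≤ w) (hx₁ : x 1 < 0)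
    (hs : s ∈ Icc (0 : ℝ) 1) :
    (2 * w + 1) - 2 * w * (exp (-(w + 1) * s) + exp (-(w + 1) * (1 - s))) ≤
      (w + 1) - w * tanh (s * x s) := by
  have hsx : 2 * (s * x s) ≤ -2 * (w + 1) * s * (1 - s) := by
    nlinarith [mul_le_mul_of_nonneg_left (hx.le_of_neg hw hx₁ hs) hs.1]
  have hexp := (exp_le_exp.2 hsx).trans (exp_neg_two_mul_mul_one_sub_le (by linarith) hs)
  nlinarith [tanh_le_neg_one_add_two_mul_exp (s * x s)]

lemma add_le_of_neg (hx : IsGuidedFlow w x) (hw : 0 ≤ w) (hx₁ : x 1 < 0) :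
    x 0 + 2 * w - 3 ≤ x 1 := by
  have hk : w + 1 ≠ 0 := by positivity
  have hG (s : ℝ) : HasDerivAt
      (fun s => (2 * w + 1) * s + 2 * w / (w + 1) * (exp (-(w + 1) * s) - exp (-(w + 1) * (1 - s))))
      ((2 * w + 1) - 2 * w * (exp (-(w + 1) * s) + exp (-(w + 1) * (1 - s)))) s := by
    refine (((hasDerivAt_id s).const_mul (2 * w + 1)).add
      ((hasDerivAt_exp_neg_mul_sub_exp_neg_mul_one_sub (w + 1) s).const_mul
        (2 * w / (w + 1)))).congr_deriv ?_
    field_simp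
    ring
  have := sub_le_sub_of_hasDerivAt_le zero_le_one hx (fun s _ => hG s)
    fun s hs => hx.lowerBound_le_deriv hw hx₁ hs
  have hE : 0 < exp (-(w + 1)) := exp_pos _
  have hq₀ : 0 ≤ 2 * w / (w + 1) := by positivity
  have hq : 2 * w / (w + 1) ≤ 2 := by rw [div_le_iff₀ (by positivity)]; linarith
  simp only [mul_zero, mul_one, sub_zero, sub_self, exp_zero] at this
  nlinarith

end IsGuidedFlow

/-- For the guided probability flow ODE `x'(s) = (w+1) - w·tanh(s·x(s))` on `[0,1]`
with `w ≥ 100` and initial condition `x(0) > -2w + 26·ln(w)`, one has `x(1) ≥ 0`. -/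
theorem stmt_1 (w : ℝ) (hw : 100 ≤ w) (x : ℝ → ℝ)
    (hode : ∀ s ∈ Set.Icc (0 : ℝ) 1,
      HasDerivAt x ((w + 1) - w * Real.tanh (s * x s)) s)
    (hinit : x 0 > -2 * w + 26 * Real.log w) :
    x 1 ≥ 0 := by
  by_contra! hx₁
  have hgrowth := IsGuidedFlow.add_le_of_neg hode (by linarith) hx₁
  have hlog : 1 ≤ log w := by
    rw [le_log_iff_exp_le (by linarith)]
    linarith [exp_one_lt_d9]
  linarith
end

section
/- Let R ≥ 2, t > 0, and let γ ~ N(2e^{-t}, 1 - e^{-2t}). Then ∫_R^∞ (1/√(2π(1-e^{-2t})))·exp(-(x - 2e^{-t})²/(2(1-e^{-2t})))·((e^{-2t}/(1-e^{-2t}))·x + 2e^{-t})² dx ≤ C·R·exp(-R²/2)/(1-e^{-2t})² for some absolute constant C. -/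
/-!
For `x ≥ R ≥ 2` the affine factor `(c²/(1-c²)) x + 2c` (with `c = e^{-t}`) is at most
`2x/(1-c²)`, so the integral is dominated by `4/(1-c²)²` times the truncated second moment
`E[γ² 1{γ > R}]` of `γ ~ N(2c, 1-c²)`. Integrating by parts, this moment equals
`s (R + m) φ(R) + (s + m²) P(γ > R)` (in terms of the density `φ`, mean `m` and variance `s`),
and comparing with the Gaussian centred at `R` gives `P(γ > R) ≤ φ(R) √(2πs)`. Finally
`(R - 2c)² = (1 - c²)(R² - 4) + (cR - 2)²` turns the factor `exp(-(R - 2c)²/(2(1-c²)))` into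
at most `e² exp(-R²/2)`.
-/

open Real MeasureTheory Set Filter

section GaussianTail

variable {s : ℝ}

lemma integrable_exp_neg_sq_div (hs : 0 < s) (m : ℝ) :
    Integrable fun x => rexp (-(x - m) ^ 2 / (2 * s)) := by
  refine ((integrable_exp_neg_mul_sq (b := 1 / (2 * s)) (by positivity)).comp_sub_right m).congr
    (ae_of_all _ fun x => ?_)
  ring_nf

lemma integrable_mul_exp_neg_sq_div (hs : 0 < s) (m : ℝ) :
    Integrable fun x => x * rexp (-(x - m) ^ 2 / (2 * s)) := by
  have h1 := (integrable_mul_exp_neg_mul_sq (b := 1 / (2 * s)) (by positivity)).comp_sub_right m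
  refine (h1.add ((integrable_exp_neg_sq_div hs m).const_mul m)).congr (ae_of_all _ fun x => ?_)
  simp only [Pi.add_apply]
  ring_nf

lemma integrable_sq_mul_exp_neg_sq_div (hs : 0 < s) (m : ℝ) :
    Integrable fun x => x ^ 2 * rexp (-(x - m) ^ 2 / (2 * s)) := by
  have h2 := (integrable_rpow_mul_exp_neg_mul_sq (b := 1 / (2 * s)) (by positivity)
    (s := 2) (by norm_num)).comp_sub_right m
  have h1 := (integrable_mul_exp_neg_mul_sq (b := 1 / (2 * s)) (by positivity)).comp_sub_right m
  refine ((h2.add (h1.const_mul (2 * m))).add ((integrable_exp_neg_sq_div hs m).const_mul (m ^ 2)))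
    |>.congr (ae_of_all _ fun x => ?_)
  simp only [Pi.add_apply, rpow_two]
  ring_nf

lemma integral_exp_neg_sq_div (hs : 0 < s) (m : ℝ) :
    ∫ x, rexp (-(x - m) ^ 2 / (2 * s)) = √(2 * π * s) := by
  rw [integral_sub_right_eq_self (fun x => rexp (-x ^ 2 / (2 * s))) m,
    show 2 * π * s = π / (1 / (2 * s)) by field_simp, ← integral_gaussian]
  congr 1 with x
  ring_nf

lemma integral_Ioi_exp_neg_sq_div_le (hs : 0 < s) {m R : ℝ} (hmR : m ≤ R) :
    ∫ x in Ioi R, rexp (-(x - m) ^ 2 / (2 * s))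
      ≤ √(2 * π * s) * rexp (-(R - m) ^ 2 / (2 * s)) := by
  have hpt : ∀ x ∈ Ioi R, rexp (-(x - m) ^ 2 / (2 * s))
      ≤ rexp (-(R - m) ^ 2 / (2 * s)) * rexp (-(x - R) ^ 2 / (2 * s)) := by
    intro x hx
    rw [← exp_add, exp_le_exp, ← add_div, div_le_div_iff_of_pos_right (by positivity)]
    nlinarith [mul_nonneg (sub_nonneg.2 (le_of_lt hx)) (sub_nonneg.2 hmR)]
  calc ∫ x in Ioi R, rexp (-(x - m) ^ 2 / (2 * s))
      ≤ ∫ x in Ioi R, rexp (-(R - m) ^ 2 / (2 * s)) * rexp (-(x - R) ^ 2 / (2 * s)) :=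
        setIntegral_mono_on (integrable_exp_neg_sq_div hs m).integrableOn
          ((integrable_exp_neg_sq_div hs R).const_mul _).integrableOn measurableSet_Ioi hpt
    _ ≤ rexp (-(R - m) ^ 2 / (2 * s)) * ∫ x, rexp (-(x - R) ^ 2 / (2 * s)) := by
        rw [integral_const_mul]
        exact mul_le_mul_of_nonneg_left (setIntegral_le_integral (integrable_exp_neg_sq_div hs R)
          (ae_of_all _ fun x => (exp_pos _).le)) (exp_pos _).le
    _ = √(2 * π * s) * rexp (-(R - m) ^ 2 / (2 * s)) := by
        rw [integral_exp_neg_sq_div hs, mul_comm]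

lemma integral_Ioi_sq_mul_exp_neg_sq_div (hs : 0 < s) (m R : ℝ) :
    ∫ x in Ioi R, x ^ 2 * rexp (-(x - m) ^ 2 / (2 * s))
      = s * (R + m) * rexp (-(R - m) ^ 2 / (2 * s))
        + (s + m ^ 2) * ∫ x in Ioi R, rexp (-(x - m) ^ 2 / (2 * s)) := by
  set g : ℝ → ℝ := fun x => rexp (-(x - m) ^ 2 / (2 * s)) with hg
  have hint : Integrable g := integrable_exp_neg_sq_div hs m
  have hint₁ : Integrable fun x => x * g x := integrable_mul_exp_neg_sq_div hs m
  have hint₂ : Integrable fun x => x ^ 2 * g x := integrable_sq_mul_exp_neg_sq_div hs m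
  set F : ℝ → ℝ := fun x => -s * ((x + m) * g x) with hF
  have hderiv : ∀ x, HasDerivAt F ((x ^ 2 - m ^ 2 - s) * g x) x := by
    intro x
    have hexp : HasDerivAt (fun x => -(x - m) ^ 2 / (2 * s)) (-(2 * (x - m) ^ 1 * 1) / (2 * s)) x :=
      (((hasDerivAt_id x).sub_const m).pow 2).neg.div_const (2 * s)
    refine ((((hasDerivAt_id x).add_const m).mul hexp.exp).const_mul (-s)).congr_deriv ?_
    simp only [hg, id]
    field_simp
    ring
  have hF'int : Integrable fun x => (x ^ 2 - m ^ 2 - s) * g x :=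
    (hint₂.sub (hint.const_mul (m ^ 2 + s))).congr
      (ae_of_all _ fun x => by simp only [Pi.sub_apply]; ring)
  have hFint : Integrable F :=
    ((hint₁.add (hint.const_mul m)).const_mul (-s)).congr
      (ae_of_all _ fun x => by simp only [hF, Pi.add_apply]; ring)
  have hlim := tendsto_zero_of_hasDerivAt_of_integrableOn_Ioi (a := R) (fun x _ => hderiv x)
    hF'int.integrableOn hFint.integrableOn
  have hFTC := integral_Ioi_of_hasDerivAt_of_tendsto' (a := R) (fun x _ => hderiv x)
    hF'int.integrableOn hlim
  have hsplit : ∫ x in Ioi R, x ^ 2 * g x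
      = (∫ x in Ioi R, (x ^ 2 - m ^ 2 - s) * g x) + (s + m ^ 2) * ∫ x in Ioi R, g x := by
    rw [← integral_const_mul,
      ← integral_add hF'int.integrableOn (hint.const_mul _).integrableOn]
    congr 1 with x
    ring
  show ∫ x in Ioi R, x ^ 2 * g x = _
  rw [hsplit, hFTC, hF]
  ring

lemma integral_Ioi_sq_mul_exp_neg_sq_div_le (hs : 0 < s) {m R : ℝ} (hmR : m ≤ R) :
    ∫ x in Ioi R, x ^ 2 * rexp (-(x - m) ^ 2 / (2 * s))
      ≤ (s * (R + m) + (s + m ^ 2) * √(2 * π * s)) * rexp (-(R - m) ^ 2 / (2 * s)) := by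
  have hB := mul_le_mul_of_nonneg_left (integral_Ioi_exp_neg_sq_div_le hs hmR)
    (by positivity : 0 ≤ s + m ^ 2)
  rw [integral_Ioi_sq_mul_exp_neg_sq_div hs]
  linarith

end GaussianTail

lemma sq_score_le {c x : ℝ} (hc0 : 0 ≤ c) (hc1 : c < 1) (hx : 2 ≤ x) :
    (c ^ 2 / (1 - c ^ 2) * x + 2 * c) ^ 2 ≤ 4 / (1 - c ^ 2) ^ 2 * x ^ 2 := by
  have hs : 0 < 1 - c ^ 2 := by nlinarith
  have h₁ : c ^ 2 / (1 - c ^ 2) * x ≤ x / (1 - c ^ 2) := by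
    rw [div_mul_eq_mul_div]
    gcongr
    nlinarith
  have h₂ : 2 * c ≤ x / (1 - c ^ 2) := by
    rw [le_div_iff₀ hs]
    nlinarith
  calc (c ^ 2 / (1 - c ^ 2) * x + 2 * c) ^ 2 ≤ (2 * x / (1 - c ^ 2)) ^ 2 := by
        gcongr
        rw [mul_div_assoc]
        linarith
    _ = 4 / (1 - c ^ 2) ^ 2 * x ^ 2 := by field_simp; ring

lemma exp_neg_sq_div_le {c : ℝ} (hc : c ^ 2 < 1) (R : ℝ) :
    rexp (-(R - 2 * c) ^ 2 / (2 * (1 - c ^ 2))) ≤ rexp 2 * rexp (-R ^ 2 / 2) := by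
  have hs : 0 < 1 - c ^ 2 := by linarith
  rw [← exp_add, exp_le_exp, div_le_iff₀ (by positivity)]
  -- `(R - 2c)² = (1 - c²)(R² - 4) + (cR - 2)²`
  nlinarith [sq_nonneg (c * R - 2)]

lemma integral_Ioi_gaussian_mul_sq_score_le {c R : ℝ} (hc0 : 0 ≤ c) (hc1 : c < 1)
    (hR : 2 ≤ R) :
    ∫ x in Ioi R, 1 / √(2 * π * (1 - c ^ 2)) * rexp (-(x - 2 * c) ^ 2 / (2 * (1 - c ^ 2)))
        * (c ^ 2 / (1 - c ^ 2) * x + 2 * c) ^ 2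
      ≤ 126 * R * rexp (-R ^ 2 / 2) / (1 - c ^ 2) ^ 2 := by
  set s := 1 - c ^ 2
  set W := √(2 * π * s)
  set E := rexp (-(R - 2 * c) ^ 2 / (2 * s))
  have hs : 0 < s := by nlinarith
  have hs1 : s ≤ 1 := by nlinarith
  have hW : 2 * s ≤ W := by
    rw [le_sqrt (by positivity) (by positivity)]
    nlinarith [pi_gt_three]
  have hW0 : 0 < W := by linarith
  have hmR : 2 * c ≤ R := by linarith
  have hE : E ≤ rexp 2 * rexp (-R ^ 2 / 2) := exp_neg_sq_div_le (by nlinarith) R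
  have hexp2 : rexp 2 < 9 := by
    have := exp_one_lt_d9
    rw [show (2 : ℝ) = 1 + 1 by norm_num, exp_add]
    nlinarith [exp_pos 1]
  calc _ ≤ ∫ x in Ioi R, 4 / (W * s ^ 2) * (x ^ 2 * rexp (-(x - 2 * c) ^ 2 / (2 * s))) := by
        refine integral_mono_of_nonneg (ae_of_all _ fun x => by positivity)
          ((integrable_sq_mul_exp_neg_sq_div hs _).const_mul _).integrableOn ?_
        rw [EventuallyLE, ae_restrict_iff' measurableSet_Ioi]
        refine ae_of_all _ fun x hx => ?_
        have := sq_score_le hc0 hc1 (hR.trans (le_of_lt hx))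
        calc _ = 1 / W * rexp (-(x - 2 * c) ^ 2 / (2 * s)) * (c ^ 2 / s * x + 2 * c) ^ 2 := rfl
          _ ≤ 1 / W * rexp (-(x - 2 * c) ^ 2 / (2 * s)) * (4 / s ^ 2 * x ^ 2) := by gcongr
          _ = _ := by field_simp
    _ ≤ 4 / (W * s ^ 2) * ((s * (R + 2 * c) + (s + (2 * c) ^ 2) * W) * E) := by
        rw [integral_const_mul]
        gcongr
        exact integral_Ioi_sq_mul_exp_neg_sq_div_le hs hmR
    _ = 4 * (s * (R + 2 * c) + (s + (2 * c) ^ 2) * W) * E / (W * s ^ 2) := by ring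
    _ ≤ 14 * R * W * E / (W * s ^ 2) := by
        gcongr ?_ * E / _
        nlinarith [mul_le_mul_of_nonneg_right hW (by linarith : 0 ≤ R + 2 * c),
          mul_le_mul_of_nonneg_left (by linarith : 0 ≤ R - 2) hW0.le]
    _ = 14 * R * E / s ^ 2 := by field_simp
    _ ≤ 126 * R * rexp (-R ^ 2 / 2) / s ^ 2 := by
        have hE9 : E ≤ 9 * rexp (-R ^ 2 / 2) :=
          hE.trans (mul_le_mul_of_nonneg_right hexp2.le (exp_pos _).le)
        have := mul_le_mul_of_nonneg_left hE9 (by linarith : (0 : ℝ) ≤ 14 * R)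
        gcongr ?_ / _
        linarith

/-- Score-estimation error tail bound: there is an absolute constant `C` such that for all
`R ≥ 2` and `t > 0`,
`∫_R^∞ φ(x; 2e^{-t}, 1-e^{-2t}) ((e^{-2t}/(1-e^{-2t})) x + 2e^{-t})² dx
  ≤ C R e^{-R²/2}/(1-e^{-2t})²`. -/
theorem stmt_16 :
    ∃ C : ℝ, 0 < C ∧ ∀ R t : ℝ, 2 ≤ R → 0 < t →
      (∫ x in Set.Ioi R,
          (1 / Real.sqrt (2 * π * (1 - Real.exp (-2 * t))))
            * Real.exp (-(x - 2 * Real.exp (-t)) ^ 2 / (2 * (1 - Real.exp (-2 * t))))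
            * ((Real.exp (-2 * t) / (1 - Real.exp (-2 * t))) * x + 2 * Real.exp (-t)) ^ 2)
        ≤ C * R * Real.exp (-R ^ 2 / 2) / (1 - Real.exp (-2 * t)) ^ 2 := by
  refine ⟨126, by norm_num, fun R t hR ht => ?_⟩
  rw [show -2 * t = -t + -t by ring, exp_add, ← sq]
  exact integral_Ioi_gaussian_mul_sq_score_le (exp_pos _).le (exp_lt_one_iff.2 (by linarith)) hR
end

section
/- Let 0 < α₁ ≤ α₂ with α₂² ≤ ln(w)/4, let β ≥ 1, w ≥ 1, and let s = a ∈ (0, 1/√2] with b² = 1 - a². Suppose p¹, p⁻¹ are densities supported on (α₁,α₂) and (-α₂,-α₁) with β-bounded ratio (i.e., p⁻¹(x₁)/p¹(x₂) ∈ [1/β, β] for all valid x₁, x₂). Then for any y ≤ ln(w)/(16α₂), the posterior probability of the negative class under Gaussian smoothing satisfies P(z = -1 | X = y) ≥ 1/(2β√w), where X = a·X₀ + b·ξ, X₀ ~ (1/2)p¹ + (1/2)p⁻¹, ξ ~ N(0,1). -/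
open MeasureTheory

/-!
Only the Gaussian factor matters. For `x₁` in the negative interval and `x₂` in the
positive one, `(y - a x₁)² - (y - a x₂)² = 2ay(x₂ - x₁) + a²(x₁² - x₂²)` is at most
`(3/8) ln w`, and `2b² ≥ 1`, so the Gaussian weight at `x₂` is at most `√w` times the weight
at `x₁`. Integrating this against the two probability densities bounds the positive-class
mass by `√w` times the negative-class mass, whence the posterior is at least
`1/(1 + √w) ≥ 1/(2β√w)`.
-/

noncomputable def gaussianWeight (a b y u : ℝ) : ℝ :=
  Real.exp (-(y - a * u) ^ 2 / (2 * b ^ 2))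

namespace gaussianWeight

lemma pos (a b y u : ℝ) : 0 < gaussianWeight a b y u := Real.exp_pos _

lemma le_one (a b y u : ℝ) : gaussianWeight a b y u ≤ 1 :=
  Real.exp_le_one_iff.2 <| div_nonpos_of_nonpos_of_nonneg (by nlinarith) (by positivity)

lemma continuous (a b y : ℝ) : Continuous (gaussianWeight a b y) := by
  unfold gaussianWeight; fun_prop

lemma _root_.MeasureTheory.Integrable.mul_gaussianWeight {μ : Measure ℝ} {p : ℝ → ℝ}
    (hp : Integrable p μ) (a b y : ℝ) : Integrable (fun u ↦ p u * gaussianWeight a b y u) μ :=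
  hp.mul_bdd (continuous a b y).aestronglyMeasurable <| .of_forall fun u ↦ by
    rw [Real.norm_of_nonneg (pos a b y u).le]; exact le_one a b y u

end gaussianWeight

lemma sq_sub_sq_le_of_le {α L a y x₁ x₂ : ℝ} (hα : 0 < α) (hαL : α ^ 2 ≤ L / 4)
    (ha : 0 ≤ a) (ha2 : a ^ 2 ≤ 1 / 2) (hy : y ≤ L / (16 * α))
    (hx₁ : -α ≤ x₁) (h12 : x₁ ≤ x₂) (hx₂ : x₂ ≤ α) :
    (y - a * x₁) ^ 2 - (y - a * x₂) ^ 2 ≤ 3 / 8 * L := by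
  have ha1 : a ≤ 1 := by nlinarith
  have hshift : y * (a * (x₂ - x₁)) ≤ L / 8 := by
    rcases le_or_gt 0 y with hy0 | hy0
    · have hyα : y * (16 * α) ≤ L := (le_div_iff₀ (by positivity)).1 hy
      have : a * (x₂ - x₁) ≤ 2 * α := by nlinarith
      nlinarith
    · nlinarith [mul_nonneg ha (sub_nonneg.2 h12)]
  have hquad : a ^ 2 * (x₁ ^ 2 - x₂ ^ 2) ≤ L / 8 := by nlinarith
  linear_combination 2 * hshift + hquad

lemma gaussianWeight_le_exp_mul {α L a b y x₁ x₂ : ℝ} (hα : 0 < α)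
    (hαL : α ^ 2 ≤ L / 4) (ha : 0 ≤ a) (ha2 : a ^ 2 ≤ 1 / 2) (hab : a ^ 2 + b ^ 2 = 1)
    (hy : y ≤ L / (16 * α))
    (hx₁ : -α ≤ x₁) (h12 : x₁ ≤ x₂) (hx₂ : x₂ ≤ α) :
    gaussianWeight a b y x₂ ≤ Real.exp (L / 2) * gaussianWeight a b y x₁ := by
  have hb2 : 1 ≤ 2 * b ^ 2 := by linarith
  have hL : 0 ≤ L := by nlinarith
  have hsq := sq_sub_sq_le_of_le hα hαL ha ha2 hy hx₁ h12 hx₂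
  have hexp : ((y - a * x₁) ^ 2 - (y - a * x₂) ^ 2) / (2 * b ^ 2) ≤ L / 2 := by
    rw [div_le_iff₀ (by positivity)]
    nlinarith
  rw [sub_div] at hexp
  unfold gaussianWeight
  rw [← Real.exp_add, Real.exp_le_exp, neg_div, neg_div]
  linarith

section Integrals

variable {Ω : Type*} [MeasurableSpace Ω] {μ ν : Measure Ω} {f g K : Ω → ℝ}

lemma integral_mul_le_const_mul_integral_mul {c : ℝ}
    (hf : ∫ x, f x ∂μ = 1) (hg : ∫ y, g y ∂ν = 1)
    (hf0 : ∀ᵐ x ∂μ, 0 ≤ f x) (hg0 : ∀ᵐ y ∂ν, 0 ≤ g y)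
    (hfK : Integrable (fun x ↦ f x * K x) μ) (hgK : Integrable (fun y ↦ g y * K y) ν)
    (hK : ∀ᵐ x ∂μ, ∀ᵐ y ∂ν, K y ≤ c * K x) :
    ∫ y, g y * K y ∂ν ≤ c * ∫ x, f x * K x ∂μ := by
  have hf_int : Integrable f μ := .of_integral_ne_zero (by simp [hf])
  have hg_int : Integrable g ν := .of_integral_ne_zero (by simp [hg])
  have hpoint : ∀ᵐ x ∂μ, ∫ y, g y * K y ∂ν ≤ c * K x := by
    filter_upwards [hK] with x hx
    calc ∫ y, g y * K y ∂ν ≤ ∫ y, g y * (c * K x) ∂ν := by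
          refine integral_mono_ae hgK (hg_int.mul_const _) ?_
          filter_upwards [hx, hg0] with y hy hgy
          exact mul_le_mul_of_nonneg_left hy hgy
      _ = c * K x := by rw [integral_mul_const, hg, one_mul]
  calc ∫ y, g y * K y ∂ν = ∫ x, f x * ∫ y, g y * K y ∂ν ∂μ := by
        rw [integral_mul_const, hf, one_mul]
    _ ≤ ∫ x, f x * (c * K x) ∂μ := by
        refine integral_mono_ae (hf_int.mul_const _) ?_ ?_
        · simpa only [mul_left_comm] using hfK.const_mul c
        · filter_upwards [hpoint, hf0] with x hx hfx
          exact mul_le_mul_of_nonneg_left hx hfx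
    _ = c * ∫ x, f x * K x ∂μ := by
        rw [← integral_const_mul]; simp only [mul_left_comm]

lemma integral_mul_pos_of_pos (hf : 0 < ∫ x, f x ∂μ) (hf0 : ∀ᵐ x ∂μ, 0 ≤ f x)
    (hK : ∀ x, 0 < K x) (hfK : Integrable (fun x ↦ f x * K x) μ) :
    0 < ∫ x, f x * K x ∂μ := by
  have hf_int : Integrable f μ := .of_integral_ne_zero hf.ne'
  have hsupp : Function.support (fun x ↦ f x * K x) = Function.support f :=
    Function.support_mul_of_ne_zero_right f fun x ↦ (hK x).ne'
  rw [integral_pos_iff_support_of_nonneg_ae _ hfK, hsupp]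
  · exact (integral_pos_iff_support_of_nonneg_ae hf0 hf_int).1 hf
  · filter_upwards [hf0] with x hx using mul_nonneg hx (hK x).le

end Integrals

lemma one_div_le_div_add_of_le_mul {m n c β : ℝ} (hm : 0 < m) (hn : 0 ≤ n) (hnm : n ≤ c * m)
    (hc : 1 ≤ c) (hβ : 1 ≤ β) :
    1 / (2 * β * c) ≤ m / (m + n) := by
  rw [div_le_div_iff₀ (by positivity) (by positivity)]
  nlinarith [mul_le_mul_of_nonneg_right hβ (by positivity : 0 ≤ c * m)]

theorem stmt_19_general (α₁ α₂ β w a b y : ℝ) (p1 pm : ℝ → ℝ)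
    (hα₁ : 0 < α₁) (hα₁₂ : α₁ ≤ α₂) (hα₂ : α₂ ^ 2 ≤ Real.log w / 4)
    (hβ : 1 ≤ β) (hw : 1 ≤ w)
    (ha : 0 < a) (ha2 : a ^ 2 ≤ 1 / 2) (hab : a ^ 2 + b ^ 2 = 1)
    (hnn1 : ∀ u, 0 ≤ p1 u) (hnnm : ∀ u, 0 ≤ pm u)
    (hsupp1 : ∀ u ∉ Set.Ioo α₁ α₂, p1 u = 0)
    (hsuppm : ∀ u ∉ Set.Ioo (-α₂) (-α₁), pm u = 0)
    (hint1 : ∫ u, p1 u = 1) (hintm : ∫ u, pm u = 1)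
    (hy : y ≤ Real.log w / (16 * α₂)) :
    (∫ u in Set.Ioo (-α₂) (-α₁), pm u * Real.exp (-(y - a * u) ^ 2 / (2 * b ^ 2)))
        / ((∫ u in Set.Ioo (-α₂) (-α₁), pm u * Real.exp (-(y - a * u) ^ 2 / (2 * b ^ 2)))
            + (∫ u in Set.Ioo α₁ α₂, p1 u * Real.exp (-(y - a * u) ^ 2 / (2 * b ^ 2))))
      ≥ 1 / (2 * β * Real.sqrt w) := by
  have hsqrt : Real.exp (Real.log w / 2) = Real.sqrt w := by
    rw [← Real.log_sqrt (by positivity), Real.exp_log (by positivity)]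
  have hp1_set : ∫ u in Set.Ioo α₁ α₂, p1 u = 1 := by
    rwa [setIntegral_eq_integral_of_forall_compl_eq_zero hsupp1]
  have hpm_set : ∫ u in Set.Ioo (-α₂) (-α₁), pm u = 1 := by
    rwa [setIntegral_eq_integral_of_forall_compl_eq_zero hsuppm]
  have hp1K : IntegrableOn (fun u ↦ p1 u * gaussianWeight a b y u) (Set.Ioo α₁ α₂) :=
    (Integrable.of_integral_ne_zero (by simp [hint1])).integrableOn.mul_gaussianWeight a b y
  have hpmK : IntegrableOn (fun u ↦ pm u * gaussianWeight a b y u) (Set.Ioo (-α₂) (-α₁)) :=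
    (Integrable.of_integral_ne_zero (by simp [hintm])).integrableOn.mul_gaussianWeight a b y
  have hK : ∀ᵐ x₁ ∂volume.restrict (Set.Ioo (-α₂) (-α₁)),
      ∀ᵐ x₂ ∂volume.restrict (Set.Ioo α₁ α₂),
        gaussianWeight a b y x₂ ≤ Real.sqrt w * gaussianWeight a b y x₁ :=
    ae_restrict_of_forall_mem measurableSet_Ioo fun x₁ hx₁ ↦
      ae_restrict_of_forall_mem measurableSet_Ioo fun x₂ hx₂ ↦ hsqrt ▸
        gaussianWeight_le_exp_mul (hα₁.trans_le hα₁₂) hα₂ ha.le ha2 hab hy hx₁.1.le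
          (by linarith [hx₁.2, hx₂.1]) hx₂.2.le
  have hpos_le : ∫ u in Set.Ioo α₁ α₂, p1 u * gaussianWeight a b y u ≤
      Real.sqrt w * ∫ u in Set.Ioo (-α₂) (-α₁), pm u * gaussianWeight a b y u :=
    integral_mul_le_const_mul_integral_mul hpm_set hp1_set (.of_forall hnnm) (.of_forall hnn1)
      hpmK hp1K hK
  have hneg_pos : 0 < ∫ u in Set.Ioo (-α₂) (-α₁), pm u * gaussianWeight a b y u :=
    integral_mul_pos_of_pos (hpm_set ▸ one_pos) (.of_forall hnnm) (gaussianWeight.pos a b y) hpmK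
  have hpos_nonneg : 0 ≤ ∫ u in Set.Ioo α₁ α₂, p1 u * gaussianWeight a b y u :=
    setIntegral_nonneg measurableSet_Ioo fun u _ ↦
      mul_nonneg (hnn1 u) (gaussianWeight.pos a b y u).le
  exact one_div_le_div_add_of_le_mul hneg_pos hpos_nonneg hpos_le (Real.one_le_sqrt.2 hw) hβ

/-- Lower bound on the posterior of the negative class under Gaussian smoothing:
for a mixture of `β`-bounded densities `p¹, p⁻¹` supported on `(α₁,α₂)` and `(-α₂,-α₁)`,
with `α₂² ≤ (ln w)/4`, `β ≥ 1`, `w ≥ 1`, smoothing parameters `a² ≤ 1/2`, `b² = 1-a²`,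
and any `y ≤ ln(w)/(16α₂)`, one has `P(z = -1 | X = y) ≥ 1/(2β√w)`. -/
theorem stmt_19 (α₁ α₂ β w a b y : ℝ) (p1 pm : ℝ → ℝ)
    (hα₁ : 0 < α₁) (hα₁₂ : α₁ ≤ α₂) (hα₂ : α₂ ^ 2 ≤ Real.log w / 4)
    (hβ : 1 ≤ β) (hw : 1 ≤ w)
    (ha : 0 < a) (ha2 : a ^ 2 ≤ 1 / 2) (hb : 0 < b) (hab : a ^ 2 + b ^ 2 = 1)
    (hmeas1 : Measurable p1) (hmeasm : Measurable pm)
    (hnn1 : ∀ u, 0 ≤ p1 u) (hnnm : ∀ u, 0 ≤ pm u)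
    (hsupp1 : ∀ u ∉ Set.Ioo α₁ α₂, p1 u = 0)
    (hsuppm : ∀ u ∉ Set.Ioo (-α₂) (-α₁), pm u = 0)
    (hint1 : ∫ u, p1 u = 1) (hintm : ∫ u, pm u = 1)
    (hratio : ∀ x₁ ∈ Set.Ioo (-α₂) (-α₁), ∀ x₂ ∈ Set.Ioo α₁ α₂,
      p1 x₂ ≤ β * pm x₁ ∧ pm x₁ ≤ β * p1 x₂)
    (hy : y ≤ Real.log w / (16 * α₂)) :
    (∫ u in Set.Ioo (-α₂) (-α₁), pm u * Real.exp (-(y - a * u) ^ 2 / (2 * b ^ 2)))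
        / ((∫ u in Set.Ioo (-α₂) (-α₁), pm u * Real.exp (-(y - a * u) ^ 2 / (2 * b ^ 2)))
            + (∫ u in Set.Ioo α₁ α₂, p1 u * Real.exp (-(y - a * u) ^ 2 / (2 * b ^ 2))))
      ≥ 1 / (2 * β * Real.sqrt w) :=
  stmt_19_general α₁ α₂ β w a b y p1 pm hα₁ hα₁₂ hα₂ hβ hw ha ha2 hab hnn1 hnnm hsupp1 hsuppm hint1
    hintm hy
end
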